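/- arXiv:1907.04981 — 9 statements merged into one kernel-verified Lean document; each statement's English description precedes it below -/
import Mathlib

section
/- Let A be a real unital C*-algebra and let J₀, J₁ be skew-adjoint unitary elements of A (complex structures, so J² = -1). If ‖J₀ - J₁‖ < 2, then for every x ∈ [0,1] the element Zₓ = 1 - x·J₀J₁ is invertible in A. -/
/-- In a real unital C*-algebra, if `J₀, J₁` are complex structures
(`J* = -J`, `J² = -1`) with `‖J₀ - J₁‖ < 2`, then `1 - x • J₀J₁` is invertible for all
`x ∈ [0,1]`. -/
theorem stmt1 {A : Type*} [NormedRing A] [StarRing A] [CStarRing A] [NormedAlgebra ℝ A]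
    [CompleteSpace A]
    (J₀ J₁ : A)
    (h₀a : star J₀ = -J₀) (h₀s : J₀ * J₀ = -1)
    (h₁a : star J₁ = -J₁) (h₁s : J₁ * J₁ = -1)
    (hdist : ‖J₀ - J₁‖ < 2) :
    ∀ x ∈ Set.Icc (0 : ℝ) 1, IsUnit (1 - x • (J₀ * J₁)) := by
  intro x hx
  obtain ⟨hx0, hx1⟩ := hx
  rcases subsingleton_or_nontrivial A with hA | hA
  · exact isUnit_of_subsingleton _
  have hJ0 : ‖J₀‖ = 1 := by
    have h := CStarRing.norm_star_mul_self (x := J₀)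
    rw [h₀a, neg_mul, h₀s, neg_neg, norm_one] at h
    nlinarith [norm_nonneg J₀]
  set u := J₀ * (J₀ - J₁) with hu
  have hnu : ‖u‖ < 2 := by
    calc ‖u‖ ≤ ‖J₀‖ * ‖J₀ - J₁‖ := norm_mul_le _ _
      _ < 2 := by rw [hJ0]; linarith
  have hx1p : (0:ℝ) < 1 + x := by linarith
  have key : 1 - x • (J₀ * J₁) = ((1 + x) • (1:A)) * (1 + (x / (1 + x)) • u) := by
    have hmul : (1 + x) * (x / (1 + x)) = x := by field_simp
    have : ((1 + x) • (1:A)) * (1 + (x / (1 + x)) • u)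
        = (1 + x) • (1:A) + x • u := by
      rw [mul_add, mul_one, smul_mul_smul_comm, hmul, one_mul]
    rw [this, hu, mul_sub, h₀s]
    rw [smul_sub]
    module
  have hvnorm : ‖(x / (1 + x)) • u‖ < 1 := by
    rw [norm_smul, Real.norm_eq_abs, abs_of_nonneg (by positivity)]
    have h1 : x / (1 + x) ≤ 1 / 2 := by
      rw [div_le_div_iff₀ hx1p (by norm_num)]
      linarith
    nlinarith [norm_nonneg u]
  have hunit2 : IsUnit (1 + (x / (1 + x)) • u) := by
    have := (Units.oneSub (-((x / (1 + x)) • u)) (by rwa [norm_neg])).isUnit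
    simpa [sub_neg_eq_add] using this
  have hunit1 : IsUnit ((1 + x) • (1:A)) := by
    have : IsUnit (algebraMap ℝ A (1 + x)) :=
      (isUnit_iff_ne_zero.mpr (by linarith)).map (algebraMap ℝ A)
    rwa [Algebra.algebraMap_eq_smul_one] at this
  rw [key]
  exact hunit1.mul hunit2
end

section
/- Let H be a real Hilbert space and T a bounded skew-adjoint operator on H which is invertible with ‖T‖ = 1. Then the spectrum of the unitary operator exp(πT) is contained in the unit circle minus the point 1; equivalently, ‖exp(πT) + I‖ < 2. -/
/-! With `a = (π/2) T` one has `exp (π T) + 1 = exp a * (exp a + exp (-a))`, and `exp (± a)` are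
unitary because `a` is skew-adjoint. By the parallelogram law
`‖(exp a + exp (-a)) x‖² = 4 ‖x‖² - ‖(exp a - exp (-a)) x‖²`, so it suffices to bound
`exp a - exp (-a)` from below. Its power series is `2 a` plus terms of degree at least three, all
of which factor through `a x`; as `‖a‖ = π/2 < 8/5` they add up to at most `(64/45) ‖a x‖`, and
`‖a x‖` is bounded below by a multiple of `‖x‖` because `T` is invertible. -/

open NormedSpace
open scoped Nat

theorem norm_pow_add_neg_pow_le {R : Type*} [NormedRing R] (a : R) {n : ℕ} (hn : 0 < n) :
    ‖a ^ n + (-a) ^ n‖ ≤ 2 * ‖a‖ ^ n :=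
  calc ‖a ^ n + (-a) ^ n‖ ≤ ‖a‖ ^ n + ‖-a‖ ^ n :=
        (norm_add_le _ _).trans (add_le_add (norm_pow_le' a hn) (norm_pow_le' (-a) hn))
    _ = 2 * ‖a‖ ^ n := by rw [norm_neg, two_mul]

theorem hasSum_exp_sub_exp_neg {A : Type*} [NormedRing A] [NormedAlgebra ℝ A] [CompleteSpace A]
    (a : A) : HasSum (fun n => (n !⁻¹ : ℝ) • (a ^ n - (-a) ^ n)) (exp a - exp (-a)) :=
  ((exp_series_hasSum_exp' a).sub (exp_series_hasSum_exp' (-a))).congr_fun fun _ =>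
    smul_sub _ _ _

section
variable {E : Type*} [NormedAddCommGroup E] [NormedSpace ℝ E] [CompleteSpace E]

/-- The quadratic term cancels and `a ^ (n + 1) x = a ^ n (a x)`, so the remainder is dominated by
a geometric series times `‖a x‖`. -/
theorem norm_exp_sub_exp_neg_apply_sub_le (a : E →L[ℝ] E) (ha : ‖a‖ < 4) (x : E) :
    ‖(exp a - exp (-a)) x - (2 : ℝ) • a x‖ ≤ ‖a‖ ^ 2 / 3 * (1 - ‖a‖ / 4)⁻¹ * ‖a x‖ := by
  have hsum := (hasSum_exp_sub_exp_neg a).mapL (ContinuousLinearMap.apply ℝ E x)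
  rw [← hasSum_nat_add_iff' 3] at hsum
  have hhead : ∑ i ∈ Finset.range 3, ContinuousLinearMap.apply ℝ E x
      ((i !⁻¹ : ℝ) • (a ^ i - (-a) ^ i)) = (2 : ℝ) • a x := by
    simp [Finset.sum_range_succ, two_smul]
  rw [hhead] at hsum
  have hgeom := (hasSum_geometric_of_lt_one (r := ‖a‖ / 4) (by positivity)
    (by linarith)).mul_left (‖a‖ ^ 2 / 3 * ‖a x‖)
  refine (hsum.norm_le_of_bounded hgeom fun n => ?_).trans_eq (by ring)
  have hfac : (6 * 4 ^ n : ℝ) ≤ (n + 3) ! := by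
    exact_mod_cast (Nat.factorial_mul_pow_le_factorial (m := 3) (n := n)).trans_eq
      (by rw [add_comm])
  have hodd : a ^ (n + 3) - (-a) ^ (n + 3) = (a ^ (n + 2) + (-a) ^ (n + 2)) * a := by
    rw [pow_succ, pow_succ (-a), mul_neg, sub_neg_eq_add, add_mul]
  calc ‖ContinuousLinearMap.apply ℝ E x (((n + 3) !⁻¹ : ℝ) • (a ^ (n + 3) - (-a) ^ (n + 3)))‖
      = ((n + 3) ! : ℝ)⁻¹ * ‖(a ^ (n + 2) + (-a) ^ (n + 2)) (a x)‖ := by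
        rw [ContinuousLinearMap.apply_apply, hodd, smul_apply, norm_smul,
          mul_apply_eq_comp, norm_inv, RCLike.norm_natCast]
    _ ≤ (6 * 4 ^ n : ℝ)⁻¹ * (2 * ‖a‖ ^ (n + 2) * ‖a x‖) := by
        gcongr
        exact ((a ^ (n + 2) + (-a) ^ (n + 2)).le_opNorm _).trans
          (by gcongr; exact norm_pow_add_neg_pow_le a (by omega))
    _ = ‖a‖ ^ 2 / 3 * ‖a x‖ * (‖a‖ / 4) ^ n := by
        rw [div_pow]
        field_simp
        ring

theorem mul_norm_apply_le_norm_exp_sub_exp_neg_apply (a : E →L[ℝ] E) (ha : ‖a‖ ≤ 8 / 5)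
    (x : E) : 26 / 45 * ‖a x‖ ≤ ‖(exp a - exp (-a)) x‖ := by
  have hrem := norm_exp_sub_exp_neg_apply_sub_le a (by linarith) x
  have hconst : ‖a‖ ^ 2 / 3 * (1 - ‖a‖ / 4)⁻¹ ≤ 64 / 45 := by
    rw [← div_eq_mul_inv, div_le_iff₀ (by linarith)]
    nlinarith [norm_nonneg a]
  have htwo : ‖(2 : ℝ) • a x‖ = 2 * ‖a x‖ := by rw [norm_smul, Real.norm_two]
  have hrev := norm_sub_norm_le ((2 : ℝ) • a x) ((exp a - exp (-a)) x)
  rw [norm_sub_rev] at hrev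
  nlinarith [norm_nonneg (a x)]
end

theorem ContinuousLinearMap.opNorm_le_sqrt_of_norm_apply_sq_le {𝕜 E F : Type*}
    [NontriviallyNormedField 𝕜] [SeminormedAddCommGroup E] [SeminormedAddCommGroup F]
    [NormedSpace 𝕜 E] [NormedSpace 𝕜 F] (f : E →L[𝕜] F) {c : ℝ}
    (h : ∀ x, ‖f x‖ ^ 2 ≤ c * ‖x‖ ^ 2) : ‖f‖ ≤ √c :=
  f.opNorm_le_bound (Real.sqrt_nonneg c) fun x => by
    rw [← Real.sqrt_sq (norm_nonneg (f x)), ← Real.sqrt_sq (norm_nonneg x),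
      ← Real.sqrt_mul' _ (sq_nonneg _)]
    exact Real.sqrt_le_sqrt (h x)

theorem IsUnit.exists_pos_mul_norm_le_norm_apply {𝕜 E : Type*} [NontriviallyNormedField 𝕜]
    [SeminormedAddCommGroup E] [NormedSpace 𝕜 E] {T : E →L[𝕜] E} (hT : IsUnit T) :
    ∃ c > 0, ∀ x, c * ‖x‖ ≤ ‖T x‖ := by
  obtain ⟨u, rfl⟩ := hT
  set S : E →L[𝕜] E := ↑u⁻¹
  refine ⟨(‖S‖ + 1)⁻¹, by positivity, fun x => ?_⟩
  rw [inv_mul_le_iff₀ (by positivity)]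
  calc ‖x‖ = ‖S ((u : E →L[𝕜] E) x)‖ := by rw [← mul_apply_eq_comp, u.inv_mul, one_apply_eq_self]
    _ ≤ ‖S‖ * ‖(u : E →L[𝕜] E) x‖ := S.le_opNorm _
    _ ≤ (‖S‖ + 1) * ‖(u : E →L[𝕜] E) x‖ := by gcongr; linarith

theorem norm_add_lt_two_of_mul_norm_le_norm_sub_apply {𝕜 H : Type*} [RCLike 𝕜]
    [NormedAddCommGroup H] [InnerProductSpace 𝕜 H] [CompleteSpace H] {U V : H →L[𝕜] H}
    (hU : U ∈ unitary (H →L[𝕜] H)) (hV : V ∈ unitary (H →L[𝕜] H)) {κ : ℝ} (hκ : 0 < κ)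
    (h : ∀ x, κ * ‖x‖ ≤ ‖(U - V) x‖) : ‖U + V‖ < 2 := by
  have hbound : ∀ x, ‖(U + V) x‖ ^ 2 ≤ (4 - κ ^ 2) * ‖x‖ ^ 2 := fun x => by
    have hpar := parallelogram_law_with_norm 𝕜 (U x) (V x)
    rw [U.norm_map_of_mem_unitary hU, V.norm_map_of_mem_unitary hV] at hpar
    have hsq := pow_le_pow_left₀ (by positivity) (h x) 2
    rw [sub_apply] at hsq
    rw [add_apply]
    nlinarith
  calc ‖U + V‖ ≤ √(4 - κ ^ 2) := (U + V).opNorm_le_sqrt_of_norm_apply_sq_le hbound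
    _ < 2 := (Real.sqrt_lt' two_pos).mpr (by nlinarith)

/-- If `T` is a bounded skew-adjoint invertible operator of norm 1 on a real
Hilbert space, then the unitary `exp(πT)` has spectrum avoiding `1`; equivalently
`‖exp(πT) + I‖ < 2`. -/
theorem stmt3 {H : Type*} [NormedAddCommGroup H] [InnerProductSpace ℝ H] [CompleteSpace H]
    (T : H →L[ℝ] H)
    (ha : ContinuousLinearMap.adjoint T = -T)
    (hinv : IsUnit T) (hn : ‖T‖ = 1) :
    ‖NormedSpace.exp (Real.pi • T) + 1‖ < 2 := by
  -- the algebraic lemmas about `exp` are stated for normed `ℚ`-algebras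
  let +nondep : NormedAlgebra ℚ (H →L[ℝ] H) := .restrictScalars ℚ ℝ _
  set a : H →L[ℝ] H := (Real.pi / 2) • T with ha_def
  have ha_skew : a ∈ skewAdjoint (H →L[ℝ] H) := by
    rw [skewAdjoint.mem_iff, ha_def, star_smul, star_trivial,
      ContinuousLinearMap.star_eq_adjoint, ha, smul_neg]
  have hna : ‖a‖ ≤ 8 / 5 := by
    rw [ha_def, norm_smul, hn, mul_one, Real.norm_of_nonneg (by positivity)]
    linarith [Real.pi_lt_d2]
  obtain ⟨c, hc, hTx⟩ := hinv.exists_pos_mul_norm_le_norm_apply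
  have hsep : ∀ x, 26 / 45 * (Real.pi / 2 * c) * ‖x‖ ≤ ‖(exp a - exp (-a)) x‖ := fun x =>
    calc 26 / 45 * (Real.pi / 2 * c) * ‖x‖ = 26 / 45 * (Real.pi / 2 * (c * ‖x‖)) := by ring
      _ ≤ 26 / 45 * (Real.pi / 2 * ‖T x‖) := by gcongr; exact hTx x
      _ = 26 / 45 * ‖a x‖ := by
          rw [ha_def, smul_apply, norm_smul, Real.norm_of_nonneg (by positivity)]
      _ ≤ ‖(exp a - exp (-a)) x‖ := mul_norm_apply_le_norm_exp_sub_exp_neg_apply a hna x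
  have hfactor : exp (Real.pi • T) + 1 = exp a * (exp a + exp (-a)) := by
    rw [mul_add, ← exp_add_of_commute (Commute.refl a),
      ← exp_add_of_commute (Commute.refl a).neg_right, add_neg_cancel, exp_zero, ha_def,
      ← add_smul, add_halves]
  have hU := exp_mem_unitary_of_mem_skewAdjoint ha_skew
  rw [hfactor, CStarRing.norm_mem_unitary_mul _ hU]
  exact norm_add_lt_two_of_mul_norm_le_norm_sub_apply hU
    (exp_mem_unitary_of_mem_skewAdjoint (neg_mem ha_skew)) (by positivity) hsep
end

section
/- Let P and Q be orthogonal projections on a real or complex Hilbert space H. Then ker(P + Q - I) = (ran P ∩ ker Q) ⊕ (ker P ∩ ran Q), where the two summands are orthogonal. -/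
/-!
If `p` and `q` are idempotent and `p x + q x = x`, applying `p` gives `p (q x) = 0` and applying
`q` gives `q (p x) = 0`, so `x = p x + q x` splits into a vector of `range p ⊓ ker q` and one of
`ker p ⊓ range q`. These two subspaces lie in `range p` and `ker p` respectively, which are
complementary for any idempotent and orthogonal when `p` is moreover self-adjoint.
-/

open LinearMap

namespace LinearMap.IsIdempotentElem

variable {R M : Type*} [Ring R] [AddCommGroup M] [Module R M] {p q : M →ₗ[R] M}

theorem ker_add_sub_one (hp : IsIdempotentElem p) (hq : IsIdempotentElem q) :
    ker (p + q - 1) = (range p ⊓ ker q) ⊔ (ker p ⊓ range q) := by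
  apply le_antisymm
  · intro x hx
    have hsum : p x + q x = x := by simpa [sub_eq_zero] using hx
    have hqq : q (q x) = q x := LinearMap.congr_fun hq.eq x
    have hpp : p (p x) = p x := LinearMap.congr_fun hp.eq x
    have hqp : q (p x) = 0 := by
      simpa [hqq] using congrArg q hsum
    have hpq : p (q x) = 0 := by
      simpa [hpp] using congrArg p hsum
    rw [← hsum]
    exact Submodule.add_mem_sup ⟨mem_range_self p x, hqp⟩ ⟨hpq, mem_range_self q x⟩
  · refine sup_le ?_ ?_
    · rintro x ⟨hxp, hxq⟩
      simp [hp.mem_range_iff.mp hxp, mem_ker.mp hxq]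
    · rintro x ⟨hxp, hxq⟩
      simp [mem_ker.mp hxp, hq.mem_range_iff.mp hxq]

theorem range_inf_ker_inf_ker_inf_range (hp : IsIdempotentElem p) (q : M →ₗ[R] M) :
    (range p ⊓ ker q) ⊓ (ker p ⊓ range q) = ⊥ :=
  eq_bot_iff.mpr <| hp.isCompl.inf_eq_bot ▸ inf_le_inf inf_le_left inf_le_left

end LinearMap.IsIdempotentElem

theorem LinearMap.IsSymmetric.isOrtho_range_inf_ker_inf_range {𝕜 E : Type*} [RCLike 𝕜]
    [NormedAddCommGroup E] [InnerProductSpace 𝕜 E] {p : E →ₗ[𝕜] E} (hp : p.IsSymmetric)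
    (q : E →ₗ[𝕜] E) : (range p ⊓ ker q) ⟂ (ker p ⊓ range q) :=
  Submodule.IsOrtho.mono inf_le_left inf_le_left <|
    hp.orthogonal_range ▸ Submodule.isOrtho_orthogonal_right _

theorem stmt4_general {𝕜 H : Type*} [RCLike 𝕜] [NormedAddCommGroup H] [InnerProductSpace 𝕜 H]
    [CompleteSpace H]
    (P Q : H →L[𝕜] H)
    (hPa : ContinuousLinearMap.adjoint P = P) (hP2 : P * P = P)
    (hQ2 : Q * Q = Q) :
    LinearMap.ker ((P + Q - 1 : H →L[𝕜] H) : H →ₗ[𝕜] H) =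
      (LinearMap.range (P : H →ₗ[𝕜] H) ⊓ LinearMap.ker (Q : H →ₗ[𝕜] H)) ⊔ (LinearMap.ker (P : H →ₗ[𝕜] H) ⊓ LinearMap.range (Q : H →ₗ[𝕜] H)) ∧
    (LinearMap.range (P : H →ₗ[𝕜] H) ⊓ LinearMap.ker (Q : H →ₗ[𝕜] H)) ⊓ (LinearMap.ker (P : H →ₗ[𝕜] H) ⊓ LinearMap.range (Q : H →ₗ[𝕜] H)) = ⊥ ∧
    ∀ x ∈ LinearMap.range (P : H →ₗ[𝕜] H) ⊓ LinearMap.ker (Q : H →ₗ[𝕜] H), ∀ y ∈ LinearMap.ker (P : H →ₗ[𝕜] H) ⊓ LinearMap.range (Q : H →ₗ[𝕜] H),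
      (inner 𝕜 x y : 𝕜) = 0 := by
  have hP : IsIdempotentElem (P : H →ₗ[𝕜] H) := ContinuousLinearMap.IsIdempotentElem.toLinearMap hP2
  have hQ : IsIdempotentElem (Q : H →ₗ[𝕜] H) := ContinuousLinearMap.IsIdempotentElem.toLinearMap hQ2
  have hPsymm : (P : H →ₗ[𝕜] H).IsSymmetric :=
    (ContinuousLinearMap.isSelfAdjoint_iff'.mpr hPa).isSymmetric
  refine ⟨?_, hP.range_inf_ker_inf_ker_inf_range _, ?_⟩
  · simpa only [ContinuousLinearMap.toLinearMap_sub, ContinuousLinearMap.toLinearMap_add,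
      ContinuousLinearMap.toLinearMap_one] using hP.ker_add_sub_one hQ
  · exact Submodule.isOrtho_iff_inner_eq.mp (hPsymm.isOrtho_range_inf_ker_inf_range _)

/-- For orthogonal projections `P, Q` on a (real or complex) Hilbert space,
`ker(P + Q - I) = (ran P ∩ ker Q) ⊕ (ker P ∩ ran Q)`, the two summands being orthogonal. -/
theorem stmt4 {𝕜 H : Type*} [RCLike 𝕜] [NormedAddCommGroup H] [InnerProductSpace 𝕜 H]
    [CompleteSpace H]
    (P Q : H →L[𝕜] H)
    (hPa : ContinuousLinearMap.adjoint P = P) (hP2 : P * P = P)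
    (hQa : ContinuousLinearMap.adjoint Q = Q) (hQ2 : Q * Q = Q) :
    LinearMap.ker ((P + Q - 1 : H →L[𝕜] H) : H →ₗ[𝕜] H) =
      (LinearMap.range (P : H →ₗ[𝕜] H) ⊓ LinearMap.ker (Q : H →ₗ[𝕜] H)) ⊔ (LinearMap.ker (P : H →ₗ[𝕜] H) ⊓ LinearMap.range (Q : H →ₗ[𝕜] H)) ∧
    (LinearMap.range (P : H →ₗ[𝕜] H) ⊓ LinearMap.ker (Q : H →ₗ[𝕜] H)) ⊓ (LinearMap.ker (P : H →ₗ[𝕜] H) ⊓ LinearMap.range (Q : H →ₗ[𝕜] H)) = ⊥ ∧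
    ∀ x ∈ LinearMap.range (P : H →ₗ[𝕜] H) ⊓ LinearMap.ker (Q : H →ₗ[𝕜] H), ∀ y ∈ LinearMap.ker (P : H →ₗ[𝕜] H) ⊓ LinearMap.range (Q : H →ₗ[𝕜] H),
      (inner 𝕜 x y : 𝕜) = 0 :=
  stmt4_general P Q hPa hP2 hQ2
end

section
/- Let P and Q be orthogonal projections on a Hilbert space H with ‖π(P - Q)‖ < 1 in the Calkin algebra (i.e., the image of P - Q in B(H)/K(H) has norm < 1). Then the operator Q restricted to ran P, viewed as an operator from ran P to ran Q, is Fredholm, and its index equals dim(ran P ∩ ker Q) - dim(ker P ∩ ran Q). -/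
/-!
Let `K` be compact with `c = ‖P - Q - K‖ < 1` and `T = Q|_{ran P} : ran P → ran Q`.
For `x ∈ ran P`, `‖x‖ ≤ ‖x - Q x‖ + ‖Q x‖ ≤ c ‖x‖ + ‖K x‖ + ‖T x‖`, i.e.
`(1 - c) ‖x‖ ≤ ‖T x‖ + ‖K x‖`. Such an estimate with `K` compact makes `ker T`
finite-dimensional (`K` is bounded below there, and Riesz's lemma applies) and `ran T` closed
(`T` is bounded below on `(ker T)ᗮ`, by extracting a subsequence along which `K` converges).
The adjoint of `T` is `P|_{ran Q}`, which satisfies the same estimate, so the cokernel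
`ran Q / ran T ≅ (ran T)ᗮ = ker T†` is finite-dimensional too, and
`ker T = ran P ∩ ker Q`, `ker T† = ran Q ∩ ker P`.
-/

open Filter Topology

theorem IsCompactOperator.finiteDimensional_of_antilipschitz {𝕜 E F : Type*}
    [NontriviallyNormedField 𝕜] [CompleteSpace 𝕜] [NormedAddCommGroup E] [NormedSpace 𝕜 E]
    [NormedAddCommGroup F] [NormedSpace 𝕜 F] {K : E →L[𝕜] F} (hK : IsCompactOperator K)
    {C : NNReal} (hC : AntilipschitzWith C K) : FiniteDimensional 𝕜 E := by
  obtain ⟨S, hS, hpre⟩ := hK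
  exact .of_totallyBounded_nhds_zero 𝕜 hpre
    (totallyBounded_preimage (hC.isUniformInducing K.uniformContinuous) hS.totallyBounded)

namespace ContinuousLinearMap

section CompactPerturbation

variable {𝕜 E F G : Type*} [RCLike 𝕜]
  [NormedAddCommGroup E] [NormedSpace 𝕜 E] [NormedAddCommGroup F] [NormedSpace 𝕜 F]
  [NormedAddCommGroup G] [NormedSpace 𝕜 G]

theorem exists_norm_eq_one_tendsto_zero_of_not_antilipschitz {T : E →L[𝕜] F}
    (hT : ¬∃ C, AntilipschitzWith C T) :
    ∃ u : ℕ → E, (∀ n, ‖u n‖ = 1) ∧ Tendsto (fun n ↦ T (u n)) atTop (𝓝 0) := by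
  rw [antilipschitzWith_iff_exists_mul_le_norm] at hT
  push Not at hT
  have (n : ℕ) : ∃ u : E, ‖u‖ = 1 ∧ ‖T u‖ ≤ 1 / (n + 1) := by
    obtain ⟨x, hx⟩ := hT (1 / (n + 1)) (by positivity)
    have hx0 : x ≠ 0 := by rintro rfl; simp at hx
    refine ⟨(‖x‖⁻¹ : 𝕜) • x, norm_smul_inv_norm hx0, ?_⟩
    rw [map_smul, norm_smul, norm_inv, RCLike.norm_ofReal, abs_norm,
      inv_mul_le_iff₀ (norm_pos_iff.2 hx0)]
    linarith
  choose u hu hTu using this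
  exact ⟨u, hu, squeeze_zero_norm hTu tendsto_one_div_add_atTop_nhds_zero_nat⟩

theorem exists_antilipschitz_of_le_add_compact [CompleteSpace E] {T : E →L[𝕜] F}
    {K : E →L[𝕜] G} (hK : IsCompactOperator K) (hT : Function.Injective T) {c : ℝ} (hc : 0 < c)
    (hTK : ∀ x, c * ‖x‖ ≤ ‖T x‖ + ‖K x‖) :
    ∃ C, AntilipschitzWith C T := by
  by_contra h
  obtain ⟨u, hu, hTu⟩ := T.exists_norm_eq_one_tendsto_zero_of_not_antilipschitz h
  obtain ⟨k, -, φ, hφ, hKu⟩ := (hK.isCompact_closure_image_closedBall 1).tendsto_subseq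
    fun n ↦ subset_closure (Set.mem_image_of_mem K (by simp [hu n] : u n ∈ Metric.closedBall 0 1))
  -- `(T, K)` is bounded below, so it is a closed embedding and `u ∘ φ` converges with it,
  -- necessarily to a zero of `T`.
  obtain ⟨C, hC⟩ : ∃ C, AntilipschitzWith C (T.prod K) :=
    antilipschitzWith_iff_exists_mul_le_norm.2 ⟨c / 2, by positivity, fun x ↦ by
      have := hTK x
      simp only [prod_apply, Prod.norm_def]
      linarith [le_max_left ‖T x‖ ‖K x‖, le_max_right ‖T x‖ ‖K x‖]⟩
  have hemb := hC.isClosedEmbedding (T.prod K).uniformContinuous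
  have hlim : Tendsto (fun n ↦ T.prod K (u (φ n))) atTop (𝓝 (0, k)) :=
    (hTu.comp hφ.tendsto_atTop).prodMk_nhds hKu
  obtain ⟨l, hl⟩ := hemb.isClosed_range.mem_of_tendsto hlim (.of_forall fun n ↦ ⟨_, rfl⟩)
  obtain rfl : l = 0 := hT (by simpa using congrArg Prod.fst hl)
  have := (hemb.tendsto_nhds_iff.2 (hl ▸ hlim)).norm
  simp [hu] at this

theorem finiteDimensional_ker_of_le_add_compact {T : E →L[𝕜] F} {K : E →L[𝕜] G}
    (hK : IsCompactOperator K) {c : ℝ} (hc : 0 < c) (hTK : ∀ x, c * ‖x‖ ≤ ‖T x‖ + ‖K x‖) :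
    FiniteDimensional 𝕜 (LinearMap.ker (T : E →ₗ[𝕜] F)) := by
  obtain ⟨C, hC⟩ : ∃ C, AntilipschitzWith C (K ∘L (LinearMap.ker (T : E →ₗ[𝕜] F)).subtypeL) :=
    antilipschitzWith_iff_exists_mul_le_norm.2 ⟨c, hc, fun x ↦ by simpa [x.2] using hTK x⟩
  exact (hK.comp_clm _).finiteDimensional_of_antilipschitz hC

end CompactPerturbation

section Hilbert

variable {𝕜 E F G : Type*} [RCLike 𝕜]
  [NormedAddCommGroup E] [InnerProductSpace 𝕜 E] [CompleteSpace E]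
  [NormedAddCommGroup F] [NormedAddCommGroup G] [NormedSpace 𝕜 G]

theorem isClosed_range_of_le_add_compact [NormedSpace 𝕜 F] {T : E →L[𝕜] F} {K : E →L[𝕜] G}
    (hK : IsCompactOperator K) {c : ℝ} (hc : 0 < c) (hTK : ∀ x, c * ‖x‖ ≤ ‖T x‖ + ‖K x‖) :
    IsClosed (LinearMap.range (T : E →ₗ[𝕜] F) : Set F) := by
  set V := (LinearMap.ker (T : E →ₗ[𝕜] F))ᗮ
  have hinj : Function.Injective (T ∘L V.subtypeL) :=
    (injective_iff_map_eq_zero _).2 fun v hv ↦ by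
      have : (v : E) ∈ LinearMap.ker (T : E →ₗ[𝕜] F) ⊓ V := ⟨hv, v.2⟩
      simpa [V, Submodule.inf_orthogonal_eq_bot] using this
  obtain ⟨C, hC⟩ := exists_antilipschitz_of_le_add_compact
    (K := K ∘L V.subtypeL) (hK.comp_clm V.subtypeL) hinj hc fun x ↦ hTK x
  have hrange : Set.range (T ∘L V.subtypeL) = Set.range T := by
    refine (Set.range_comp_subset_range V.subtypeL T).antisymm ?_
    rintro _ ⟨x, rfl⟩
    obtain ⟨y, hy, z, hz, rfl⟩ :=
      Submodule.exists_add_mem_mem_orthogonal (K := LinearMap.ker (T : E →ₗ[𝕜] F)) x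
    exact ⟨⟨z, hz⟩, by simpa using hy⟩
  rw [LinearMap.coe_range, coe_coe, ← hrange]
  exact hC.isClosed_range (T ∘L V.subtypeL).uniformContinuous

noncomputable def quotientRangeEquivKerAdjoint [InnerProductSpace 𝕜 F] [CompleteSpace F]
    (T : E →L[𝕜] F) (hT : IsClosed (LinearMap.range (T : E →ₗ[𝕜] F) : Set F)) :
    (F ⧸ LinearMap.range (T : E →ₗ[𝕜] F)) ≃ₗ[𝕜] LinearMap.ker (adjoint T : F →ₗ[𝕜] E) :=
  haveI : CompleteSpace (LinearMap.range (T : E →ₗ[𝕜] F)) := hT.completeSpace_coe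
  (Submodule.quotientEquivOfIsCompl _ _ (Submodule.isCompl_orthogonal _)).trans
    (LinearEquiv.ofEq _ _ T.orthogonal_range)

end Hilbert

end ContinuousLinearMap

section RestrictRanges

variable {𝕜 H : Type*} [RCLike 𝕜] [NormedAddCommGroup H] [NormedSpace 𝕜 H]

theorem apply_eq_self_of_mem_range {P : H →L[𝕜] H} (hP : IsIdempotentElem P) {x : H}
    (hx : x ∈ LinearMap.range (P : H →ₗ[𝕜] H)) : P x = x :=
  (LinearMap.IsIdempotentElem.mem_range_iff
    (ContinuousLinearMap.IsIdempotentElem.toLinearMap hP)).1 hx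

def restrictRanges (P Q : H →L[𝕜] H) :
    LinearMap.range (P : H →ₗ[𝕜] H) →L[𝕜] LinearMap.range (Q : H →ₗ[𝕜] H) :=
  (Q ∘L (LinearMap.range (P : H →ₗ[𝕜] H)).subtypeL).codRestrict _
    fun x ↦ LinearMap.mem_range_self (Q : H →ₗ[𝕜] H) x

@[simp]
theorem coe_restrictRanges_apply (P Q : H →L[𝕜] H) (x : LinearMap.range (P : H →ₗ[𝕜] H)) :
    (restrictRanges P Q x : H) = Q x :=
  rfl

theorem finrank_ker_restrictRanges (P Q : H →L[𝕜] H) :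
    Module.finrank 𝕜 (LinearMap.ker (restrictRanges P Q).toLinearMap) =
      Module.finrank 𝕜 ↥(LinearMap.range (P : H →ₗ[𝕜] H) ⊓ LinearMap.ker (Q : H →ₗ[𝕜] H)) := by
  have h : LinearMap.ker (restrictRanges P Q).toLinearMap =
      (LinearMap.range (P : H →ₗ[𝕜] H) ⊓ LinearMap.ker (Q : H →ₗ[𝕜] H)).comap
        (LinearMap.range (P : H →ₗ[𝕜] H)).subtype := by
    ext x
    simp [Subtype.ext_iff]
  exact ((LinearEquiv.ofEq _ _ h).trans (Submodule.comapSubtypeEquivOfLe inf_le_left)).finrank_eq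

theorem norm_sub_apply_le (P Q K : H →L[𝕜] H) (x : H) :
    ‖P x - Q x‖ ≤ ‖P - Q - K‖ * ‖x‖ + ‖K x‖ :=
  calc ‖P x - Q x‖ = ‖(P - Q - K) x + K x‖ := by simp
    _ ≤ ‖(P - Q - K) x‖ + ‖K x‖ := norm_add_le _ _
    _ ≤ ‖P - Q - K‖ * ‖x‖ + ‖K x‖ := by gcongr; exact (P - Q - K).le_opNorm x

theorem sub_mul_norm_le_norm_restrictRanges_add {P Q K : H →L[𝕜] H} (hP : IsIdempotentElem P)
    {c : ℝ} (hPQ : ∀ x, ‖P x - Q x‖ ≤ c * ‖x‖ + ‖K x‖) (x : LinearMap.range (P : H →ₗ[𝕜] H)) :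
    (1 - c) * ‖x‖ ≤ ‖restrictRanges P Q x‖ + ‖K x‖ := by
  have hPQx := hPQ x
  rw [apply_eq_self_of_mem_range hP x.2] at hPQx
  have := norm_le_norm_sub_add (x : H) (Q x)
  simp only [Submodule.coe_norm, coe_restrictRanges_apply]
  linarith

end RestrictRanges

theorem adjoint_restrictRanges {𝕜 H : Type*} [RCLike 𝕜] [NormedAddCommGroup H]
    [InnerProductSpace 𝕜 H] [CompleteSpace H] {P Q : H →L[𝕜] H}
    (hP : IsStarProjection P) (hQ : IsStarProjection Q)
    [CompleteSpace (LinearMap.range (P : H →ₗ[𝕜] H))]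
    [CompleteSpace (LinearMap.range (Q : H →ₗ[𝕜] H))] :
    ContinuousLinearMap.adjoint (restrictRanges P Q) = restrictRanges Q P := by
  refine (((restrictRanges Q P).eq_adjoint_iff _).2 fun x y ↦ ?_).symm
  simp only [Submodule.coe_inner, coe_restrictRanges_apply]
  calc inner 𝕜 (P x) (y : H) = inner 𝕜 (x : H) (P y) := hP.isSelfAdjoint.isSymmetric _ _
    _ = inner 𝕜 (Q x) (y : H) := by
      rw [apply_eq_self_of_mem_range hQ.isIdempotentElem x.2,
        apply_eq_self_of_mem_range hP.isIdempotentElem y.2]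
    _ = inner 𝕜 (x : H) (Q y) := hQ.isSelfAdjoint.isSymmetric _ _

/-- If `P, Q` are orthogonal projections with `‖P - Q‖ < 1` in the Calkin algebra
(expressed as: `P - Q` is within distance `< 1` of a compact operator), then
`Q|_{ran P} : ran P → ran Q` is Fredholm with index
`dim(ran P ∩ ker Q) - dim(ker P ∩ ran Q)`. -/
theorem stmt5 {𝕜 H : Type*} [RCLike 𝕜] [NormedAddCommGroup H] [InnerProductSpace 𝕜 H]
    [CompleteSpace H]
    (P Q : H →L[𝕜] H)
    (hPa : ContinuousLinearMap.adjoint P = P) (hP2 : P * P = P)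
    (hQa : ContinuousLinearMap.adjoint Q = Q) (hQ2 : Q * Q = Q)
    (hCalkin : ∃ K : H →L[𝕜] H, IsCompactOperator ⇑K ∧ ‖P - Q - K‖ < 1)
    (g : ↥(LinearMap.range (P : H →ₗ[𝕜] H)) →ₗ[𝕜] ↥(LinearMap.range (Q : H →ₗ[𝕜] H)))
    (hg : ∀ x : ↥(LinearMap.range (P : H →ₗ[𝕜] H)), (g x : H) = Q x) :
    FiniteDimensional 𝕜 ↥(LinearMap.ker g) ∧
    FiniteDimensional 𝕜 (↥(LinearMap.range (Q : H →ₗ[𝕜] H)) ⧸ LinearMap.range g) ∧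
    (Module.finrank 𝕜 ↥(LinearMap.ker g) : ℤ) -
        (Module.finrank 𝕜 (↥(LinearMap.range (Q : H →ₗ[𝕜] H)) ⧸ LinearMap.range g) : ℤ) =
      (Module.finrank 𝕜 ↥(LinearMap.range (P : H →ₗ[𝕜] H) ⊓ LinearMap.ker (Q : H →ₗ[𝕜] H)) : ℤ) -
        (Module.finrank 𝕜 ↥(LinearMap.ker (P : H →ₗ[𝕜] H) ⊓ LinearMap.range (Q : H →ₗ[𝕜] H)) : ℤ) := by
  obtain ⟨K, hK, hPQK⟩ := hCalkin
  have := ContinuousLinearMap.IsIdempotentElem.isClosed_range hP2 |>.completeSpace_coe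
  have := ContinuousLinearMap.IsIdempotentElem.isClosed_range hQ2 |>.completeSpace_coe
  obtain rfl : g = (restrictRanges P Q).toLinearMap := LinearMap.ext fun x ↦ Subtype.ext (hg x)
  have hc : 0 < 1 - ‖P - Q - K‖ := sub_pos.2 hPQK
  have hPQ := sub_mul_norm_le_norm_restrictRanges_add (Q := Q) hP2 (norm_sub_apply_le P Q K)
  have hQP := sub_mul_norm_le_norm_restrictRanges_add (Q := P) hQ2
    fun x ↦ norm_sub_rev (P x) (Q x) ▸ norm_sub_apply_le P Q K x
  have hKP : IsCompactOperator (K ∘L (LinearMap.range (P : H →ₗ[𝕜] H)).subtypeL) :=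
    hK.comp_clm _
  have hKQ : IsCompactOperator (K ∘L (LinearMap.range (Q : H →ₗ[𝕜] H)).subtypeL) :=
    hK.comp_clm _
  have := (restrictRanges P Q).finiteDimensional_ker_of_le_add_compact hKP hc hPQ
  have := (restrictRanges Q P).finiteDimensional_ker_of_le_add_compact hKQ hc hQP
  let e := ((restrictRanges P Q).quotientRangeEquivKerAdjoint
    ((restrictRanges P Q).isClosed_range_of_le_add_compact hKP hc hPQ)).trans
    (LinearEquiv.ofEq _ _ (by rw [adjoint_restrictRanges ⟨hP2, hPa⟩ ⟨hQ2, hQa⟩]))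
  refine ⟨inferInstance, e.symm.finiteDimensional, ?_⟩
  rw [e.finrank_eq, finrank_ker_restrictRanges, finrank_ker_restrictRanges,
    inf_comm (LinearMap.ker _)]
end

section
/- Let J₀, J₁ be complex structures on a real Hilbert space H forming a Fredholm pair (‖π(J₀-J₁)‖ < 2 in the Calkin algebra), and set T₀ = (J₀+J₁)/2, T₁ = (J₀-J₁)/2. For 0 < λ < 1, let X_λ be the range of the spectral projection χ_{(0,λ²)}(-T₀²). Then T₁ is invertible on X_λ, the operator J₀T₁T₀ is skew-adjoint and anti-commutes with J₀, and X_λ is invariant under T₁T₀. -/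
/-!
Writing `T₀ = (J₀ + J₁)/2` and `T₁ = (J₀ - J₁)/2`, the relations `J₀² = J₁² = -1` give
`T₀² + T₁² = -1` and `J₀T₁T₀ = -(J₁ + J₀J₁J₀)/4`. The operator `J₁ + J₀J₁J₀` is skew-adjoint and
anticommutes with `J₀`, which gives the two algebraic claims. Since `T₀` and `T₁` commute with
`T₀² = -1 - T₁²`, they commute with the spectral projection `E`, so they preserve `X_λ = ran E`.
On the closed subspace `X_λ` we have `‖T₀²‖ ≤ λ² < 1`, so `T₁² = -(1 + T₀²)` is invertible there
by a Neumann series, and hence so is `T₁`.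
-/

open ContinuousLinearMap

section ComplexStructures

variable {A : Type*} [Ring A] [Algebra ℝ A] {J₀ J₁ T₀ T₁ : A}

theorem mul_self_add_mul_self_eq_neg_one (h₀ : J₀ * J₀ = -1) (h₁ : J₁ * J₁ = -1)
    (hT₀ : T₀ = (1 / 2 : ℝ) • (J₀ + J₁)) (hT₁ : T₁ = (1 / 2 : ℝ) • (J₀ - J₁)) :
    T₀ * T₀ + T₁ * T₁ = -1 := by
  subst hT₀ hT₁
  simp only [smul_mul_smul_comm, add_mul, mul_add, sub_mul, mul_sub, h₀, h₁]
  module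

theorem mul_mul_eq_neg_smul_add_mul_mul (h₀ : J₀ * J₀ = -1) (h₁ : J₁ * J₁ = -1)
    (hT₀ : T₀ = (1 / 2 : ℝ) • (J₀ + J₁)) (hT₁ : T₁ = (1 / 2 : ℝ) • (J₀ - J₁)) :
    J₀ * T₁ * T₀ = -(1 / 4 : ℝ) • (J₁ + J₀ * J₁ * J₀) := by
  have hT₁T₀ : T₁ * T₀ = (1 / 4 : ℝ) • (J₀ * J₁ - J₁ * J₀) := by
    subst hT₀ hT₁
    simp only [smul_mul_smul_comm, mul_add, sub_mul, h₀, h₁]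
    module
  rw [mul_assoc, hT₁T₀, mul_smul_comm, mul_sub, ← mul_assoc, h₀, neg_one_mul, ← mul_assoc]
  module

end ComplexStructures

theorem add_mul_mul_mul_eq_neg_mul {A : Type*} [Ring A] {J₀ J₁ : A} (h₀ : J₀ * J₀ = -1) :
    (J₁ + J₀ * J₁ * J₀) * J₀ = -(J₀ * (J₁ + J₀ * J₁ * J₀)) := by
  rw [add_mul, mul_add, mul_assoc _ J₀ J₀, h₀, ← mul_assoc, ← mul_assoc, h₀]
  noncomm_ring

theorem add_mul_mul_mem_skewAdjoint {A : Type*} [Ring A] [StarRing A] {J₀ J₁ : A}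
    (h₀ : J₀ ∈ skewAdjoint A) (h₁ : J₁ ∈ skewAdjoint A) :
    J₁ + J₀ * J₁ * J₀ ∈ skewAdjoint A := by
  have hconj := skewAdjoint.conjugate h₁ J₀
  rw [skewAdjoint.mem_iff.mp h₀, mul_neg] at hconj
  exact add_mem h₁ (neg_mem_iff.mp hconj)

theorem Commute.apply_mem_range {R M : Type*} [Semiring R] [TopologicalSpace M]
    [AddCommMonoid M] [Module R M] {S E : M →L[R] M} (h : Commute S E) {x : M}
    (hx : x ∈ LinearMap.range (E : M →ₗ[R] M)) : S x ∈ LinearMap.range (E : M →ₗ[R] M) := by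
  obtain ⟨y, rfl⟩ := hx
  exact ⟨S y, congr($h.symm y)⟩

theorem isUnit_of_mul_self_add_eq_neg_one {R : Type*} [NormedRing R] [HasSummableGeomSeries R]
    {a b : R} (h : a * a + b = -1) (hb : ‖b‖ < 1) : IsUnit a := by
  have hsq : a ^ 2 = -(1 - -b) := by rw [sq, eq_neg_add_of_add_eq h]; abel
  rw [← isUnit_pow_iff two_ne_zero, hsq]
  exact (isUnit_one_sub_of_norm_lt_one (by rwa [norm_neg])).neg

theorem ContinuousLinearMap.bijective_restrict_of_mul_self_add_mul_self_eq_neg_one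
    {𝕜 X : Type*} [NontriviallyNormedField 𝕜] [NormedAddCommGroup X] [NormedSpace 𝕜 X]
    [CompleteSpace X] {S T : X →L[𝕜] X} {p : Submodule 𝕜 X} (hp : IsClosed (p : Set X))
    (hS : ∀ x ∈ p, S x ∈ p) (hT : ∀ x ∈ p, T x ∈ p) (hST : S * S + T * T = -1)
    {c : ℝ} (hc₀ : 0 ≤ c) (hc₁ : c < 1) (hSc : ∀ x ∈ p, ‖S x‖ ≤ c * ‖x‖) :
    Function.Bijective (T.restrict hT) := by
  have := hp.completeSpace_coe
  have hsum : T.restrict hT * T.restrict hT + S.restrict hS * S.restrict hS = -1 := by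
    ext x
    simpa [add_comm] using congr($hST x)
  have hnorm : ‖S.restrict hS‖ ≤ c := opNorm_le_bound _ hc₀ fun x => hSc x x.2
  have hsmall : ‖S.restrict hS * S.restrict hS‖ < 1 :=
    (norm_mul_le _ _).trans_lt (by nlinarith [norm_nonneg (S.restrict hS)])
  exact isUnit_iff_bijective.mp (isUnit_of_mul_self_add_eq_neg_one hsum hsmall)

theorem stmt8_general {H : Type*} [NormedAddCommGroup H] [InnerProductSpace ℝ H] [CompleteSpace H]
    (J₀ J₁ T₀ T₁ E : H →L[ℝ] H)
    (h₀a : ContinuousLinearMap.adjoint J₀ = -J₀) (h₀s : J₀ * J₀ = -1)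
    (h₁a : ContinuousLinearMap.adjoint J₁ = -J₁) (h₁s : J₁ * J₁ = -1)
    (hT₀ : T₀ = (1 / 2 : ℝ) • (J₀ + J₁)) (hT₁ : T₁ = (1 / 2 : ℝ) • (J₀ - J₁))
    (lam : ℝ) (hlam0 : 0 < lam) (hlam1 : lam < 1)
    (hE2 : E * E = E)
    (hEbicomm : ∀ S : H →L[ℝ] H, S * (T₀ * T₀) = (T₀ * T₀) * S → S * E = E * S)
    (hEupper : ∀ x : H, ‖T₀ (E x)‖ ≤ lam * ‖E x‖) :
    (∀ x ∈ LinearMap.range (E : H →ₗ[ℝ] H), (T₁ * T₀) x ∈ LinearMap.range (E : H →ₗ[ℝ] H)) ∧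
    ContinuousLinearMap.adjoint (J₀ * T₁ * T₀) = -(J₀ * T₁ * T₀) ∧
    (J₀ * T₁ * T₀) * J₀ = -(J₀ * (J₀ * T₁ * T₀)) ∧
    ∃ h : ∀ x ∈ LinearMap.range (E : H →ₗ[ℝ] H), T₁ x ∈ LinearMap.range (E : H →ₗ[ℝ] H),
      Function.Bijective ((T₁ : H →ₗ[ℝ] H).restrict h) := by
  have hsq := mul_self_add_mul_self_eq_neg_one h₀s h₁s hT₀ hT₁
  have hK := mul_mul_eq_neg_smul_add_mul_mul h₀s h₁s hT₀ hT₁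
  have hT₀E : Commute T₀ E := hEbicomm T₀ ((Commute.refl T₀).mul_right (Commute.refl T₀))
  have hT₁E : Commute T₁ E := hEbicomm T₁ <| by
    rw [eq_sub_of_add_eq hsq]
    exact (Commute.one_right T₁).neg_right.sub_right ((Commute.refl T₁).mul_right (.refl T₁))
  have hT₁_mapsTo := fun x (hx : x ∈ LinearMap.range (E : H →ₗ[ℝ] H)) => hT₁E.apply_mem_range hx
  refine ⟨fun x hx => (hT₁E.mul_left hT₀E).apply_mem_range hx, ?_, ?_, hT₁_mapsTo, ?_⟩
  · rw [← star_eq_adjoint, ← skewAdjoint.mem_iff, hK]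
    exact skewAdjoint.smul_mem _ (add_mul_mul_mem_skewAdjoint
      (skewAdjoint.mem_iff.mpr h₀a) (skewAdjoint.mem_iff.mpr h₁a))
  · rw [hK, smul_mul_assoc, add_mul_mul_mul_eq_neg_mul h₀s, mul_smul_comm, smul_neg]
  · exact bijective_restrict_of_mul_self_add_mul_self_eq_neg_one
      (IsIdempotentElem.isClosed_range hE2) (fun x hx => hT₀E.apply_mem_range hx) hT₁_mapsTo hsq
      hlam0.le hlam1 (by rintro _ ⟨y, rfl⟩; exact hEupper y)

/-- For a Fredholm pair of complex structures `(J₀, J₁)` on a real Hilbert space,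
with `T₀ = (J₀+J₁)/2`, `T₁ = (J₀-J₁)/2` and `0 < λ < 1`, let `E` be the spectral projection
`χ_{(0,λ²)}(-T₀²)` (encoded: `E` is a self-adjoint idempotent lying in the double commutant of
`T₀² = -T₀*T₀`, on whose range `‖T₀x‖ ≤ λ‖x‖` and `T₀` is injective), and let
`X_λ = ran E`. Then `X_λ` is invariant under `T₁T₀`, the operator `J₀T₁T₀` is skew-adjoint
and anti-commutes with `J₀`, and `T₁` restricts to a bijection of `X_λ`. -/
theorem stmt8 {H : Type*} [NormedAddCommGroup H] [InnerProductSpace ℝ H] [CompleteSpace H]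
    (J₀ J₁ T₀ T₁ E : H →L[ℝ] H)
    (h₀a : ContinuousLinearMap.adjoint J₀ = -J₀) (h₀s : J₀ * J₀ = -1)
    (h₁a : ContinuousLinearMap.adjoint J₁ = -J₁) (h₁s : J₁ * J₁ = -1)
    (hT₀ : T₀ = (1 / 2 : ℝ) • (J₀ + J₁)) (hT₁ : T₁ = (1 / 2 : ℝ) • (J₀ - J₁))
    (hCalkin : ∃ K : H →L[ℝ] H, IsCompactOperator ⇑K ∧ ‖J₀ - J₁ - K‖ < 2)
    (lam : ℝ) (hlam0 : 0 < lam) (hlam1 : lam < 1)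
    (hEsa : ContinuousLinearMap.adjoint E = E) (hE2 : E * E = E)
    (hEbicomm : ∀ S : H →L[ℝ] H, S * (T₀ * T₀) = (T₀ * T₀) * S → S * E = E * S)
    (hEupper : ∀ x : H, ‖T₀ (E x)‖ ≤ lam * ‖E x‖)
    (hEinj : ∀ x : H, E x ≠ 0 → T₀ (E x) ≠ 0) :
    (∀ x ∈ LinearMap.range (E : H →ₗ[ℝ] H), (T₁ * T₀) x ∈ LinearMap.range (E : H →ₗ[ℝ] H)) ∧
    ContinuousLinearMap.adjoint (J₀ * T₁ * T₀) = -(J₀ * T₁ * T₀) ∧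
    (J₀ * T₁ * T₀) * J₀ = -(J₀ * (J₀ * T₁ * T₀)) ∧
    ∃ h : ∀ x ∈ LinearMap.range (E : H →ₗ[ℝ] H), T₁ x ∈ LinearMap.range (E : H →ₗ[ℝ] H),
      Function.Bijective ((T₁ : H →ₗ[ℝ] H).restrict h) :=
  stmt8_general J₀ J₁ T₀ T₁ E h₀a h₀s h₁a h₁s hT₀ hT₁ lam hlam0 hlam1 hE2 hEbicomm hEupper
end

section
/- Let H be a finite-dimensional real inner product space and U₀, U₁ orthogonal operators on H. Then (-1)^{dim ker(I + U₀*U₁)} = det(U₀)·det(U₁). -/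
/-!
Put `V = U₀ᵀ U₁`, again orthogonal, and `W = ker (1 + V)`. Since `(1 + V)ᵀ = Vᵀ (1 + V)`, the
maps `1 + V` and `1 + Vᵀ` have the same kernel, so `range (1 + V) = Wᗮ`. Hence `Wᗮ` is
`V`-invariant and `V` induces `-1` on `E ⧸ Wᗮ ≅ W`, which gives
`det V = det (V|Wᗮ) · (-1) ^ dim W`. On `Wᗮ` the orthogonal map `V` has no eigenvalue `-1`,
and taking determinants in `(1 + V)ᵀ = Vᵀ (1 + V)` with `1 + V` invertible shows `det (V|Wᗮ) = 1`.
-/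

open Module LinearMap
open scoped InnerProductSpace

namespace LinearMap

section RCLike

variable {𝕜 E : Type*} [RCLike 𝕜] [NormedAddCommGroup E] [InnerProductSpace 𝕜 E]
  [FiniteDimensional 𝕜 E]

theorem det_adjoint (f : E →ₗ[𝕜] E) :
    LinearMap.det (adjoint f) = starRingEnd 𝕜 (LinearMap.det f) := by
  let b := (stdOrthonormalBasis 𝕜 E).toBasis
  rw [← det_toMatrix b, ← det_toMatrix b, toMatrix_adjoint, Matrix.det_conjTranspose]
  rfl

theorem adjoint_mul_self_eq_one_iff (f : E →ₗ[𝕜] E) :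
    adjoint f * f = 1 ↔ ∀ x y, ⟪f x, f y⟫_𝕜 = ⟪x, y⟫_𝕜 := by
  constructor
  · intro h x y
    rw [← adjoint_inner_left, ← Module.End.mul_apply, h, Module.End.one_apply]
  · intro h
    ext x
    refine ext_inner_right 𝕜 fun y => ?_
    rw [Module.End.mul_apply, adjoint_inner_left, h, Module.End.one_apply]

variable {V : E →ₗ[𝕜] E}

theorem ker_one_add_adjoint_eq_ker_one_add (hV : adjoint V * V = 1) :
    ker (1 + adjoint V) = ker (1 + V) := by
  have hinj : ker (adjoint V) = ⊥ := ker_eq_bot_of_inverse (mul_eq_one_comm.mp hV)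
  have hfactor : 1 + adjoint V = adjoint V * (1 + V) := by
    rw [mul_add, mul_one, hV, add_comm]
  rw [hfactor, Module.End.mul_eq_comp, ker_comp_of_ker_eq_bot _ hinj]

theorem range_one_add_eq_orthogonal_ker_one_add (hV : adjoint V * V = 1) :
    range (1 + V) = (ker (1 + V))ᗮ := by
  rw [← ker_one_add_adjoint_eq_ker_one_add hV, orthogonal_ker, map_add, adjoint_one,
    adjoint_adjoint]

end RCLike

variable {E : Type*} [NormedAddCommGroup E] [InnerProductSpace ℝ E] [FiniteDimensional ℝ E]
  {V : E →ₗ[ℝ] E}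

theorem det_eq_one_of_ker_one_add_eq_bot (hV : adjoint V * V = 1) (hker : ker (1 + V) = ⊥) :
    LinearMap.det V = 1 := by
  have hdet : LinearMap.det (1 + V) ≠ 0 := fun h => det_eq_zero_iff_ker_ne_bot.mp h hker
  have hadj : adjoint (1 + V) = adjoint V * (1 + V) := by
    rw [map_add, adjoint_one, mul_add, mul_one, hV, add_comm]
  have hdet_adj := congrArg LinearMap.det hadj
  rw [det_adjoint, map_mul, det_adjoint, conj_trivial, conj_trivial] at hdet_adj
  exact mul_right_cancel₀ hdet (by rw [one_mul, ← hdet_adj])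

theorem det_eq_neg_one_pow_finrank_ker_one_add (hV : adjoint V * V = 1) :
    LinearMap.det V = (-1) ^ finrank ℝ (ker (1 + V)) := by
  set W := ker (1 + V)
  have hmem : ∀ x, x + V x ∈ Wᗮ := fun x =>
    range_one_add_eq_orthogonal_ker_one_add hV ▸ mem_range_self (1 + V) x
  have hinv : Wᗮ ≤ Wᗮ.comap V := fun y hy => by
    simpa using Wᗮ.sub_mem (hmem y) hy
  have hquot : Wᗮ.mapQ Wᗮ V hinv = -1 := by
    ext x
    simpa [← Submodule.Quotient.mk_neg, Submodule.Quotient.eq, add_comm] using hmem x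
  have hrestrict : LinearMap.det (V.restrict hinv) = 1 := by
    refine det_eq_one_of_ker_one_add_eq_bot ?_ ?_
    · rw [adjoint_mul_self_eq_one_iff] at hV ⊢
      exact fun x y => hV x y
    · refine ker_eq_bot'.mpr fun x hx => Subtype.ext ?_
      have hxW : (x : E) ∈ W := by simpa [W] using congrArg Subtype.val hx
      exact (Submodule.orthogonal_disjoint W).le_bot ⟨hxW, x.2⟩
  rw [det_eq_det_mul_det Wᗮ V hinv, hrestrict, hquot, one_mul, ← neg_one_smul ℝ 1, det_smul,
    map_one, mul_one, (Wᗮ.quotientEquivOfIsCompl W W.isCompl_orthogonal.symm).finrank_eq]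

end LinearMap

/-- For orthogonal operators `U₀, U₁` on a finite-dimensional real inner product
space, `(-1)^{dim ker(I + U₀*U₁)} = det U₀ · det U₁`. -/
theorem stmt10 {H : Type*} [NormedAddCommGroup H] [InnerProductSpace ℝ H]
    [FiniteDimensional ℝ H]
    (U₀ U₁ : H →ₗ[ℝ] H)
    (hU₀ : LinearMap.adjoint U₀ * U₀ = 1) (hU₁ : LinearMap.adjoint U₁ * U₁ = 1) :
    (-1 : ℝ) ^ Module.finrank ℝ ↥(LinearMap.ker (1 + LinearMap.adjoint U₀ * U₁)) =
      LinearMap.det U₀ * LinearMap.det U₁ := by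
  have hV : adjoint (adjoint U₀ * U₁) * (adjoint U₀ * U₁) = 1 := by
    rw [← star_eq_adjoint, star_mul, star_eq_adjoint, star_eq_adjoint, adjoint_adjoint,
      mul_assoc, ← mul_assoc U₀, mul_eq_one_comm.mp hU₀, one_mul, hU₁]
  rw [← det_eq_neg_one_pow_finrank_ker_one_add hV, map_mul, det_adjoint, conj_trivial]
end

section
/- Let T be a bounded skew-adjoint Fredholm operator on a real Hilbert space H and F a skew-adjoint unitary on H (F² = -I) anti-commuting with T. Then the Cayley transform Φ(T) = -F(I + TF)(I - TF)⁻¹ is well-defined (I - TF is invertible), skew-adjoint, unitary, and Φ(T)² = -I; moreover ‖π(Φ(T) - F)‖ < 2 in the Calkin algebra. -/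
/-!
Write `A = TF`. Both `T` and `F` are skew-adjoint and anticommute, so `A` is skew-adjoint; hence
`‖(1 - A)x‖² = ‖x‖² + ‖Ax‖²`, the operator `1 - A` is coercive and invertible (Lax–Milgram), and
its Cayley transform `U = (1 + A)(1 - A)⁻¹` is orthogonal with `FU = U*F`. The algebraic
properties of `Φ = -FU` follow formally from `F* = -F`, `F² = -1`.

For the Calkin estimate, `Φ - F = -2F(1 - A)⁻¹`. Let `P` be the projection onto `ker A`, which is
finite dimensional since `ker A = (range A)ᗮ` and `range A = range T` has finite codimension.
By the open mapping theorem, `‖y‖ ≤ C‖Ay‖` on `(ker A)ᗮ`. For `y = ((1 - A)⁻¹ - P)z` we have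
`(1 - A)y = z - Pz` and `y ⊥ ker A`, so `‖y‖² + ‖Ay‖² ≤ ‖z‖²` gives
`‖(1 - A)⁻¹ - P‖ ≤ C/√(1 + C²) < 1`. Thus `K = -2FP` is compact and `‖Φ - F - K‖ < 2`.
-/

open RealInnerProductSpace ContinuousLinearMap

section CayleyAlgebra

variable {R : Type*} [Ring R] [StarRing R] {F A S U : R}

theorem star_neg_mul_eq_neg (hF : star F = -F) (hFU : F * U = star U * F) :
    star (-F * U) = -(-F * U) := by
  rw [star_mul, star_neg, hF, neg_neg, neg_mul, neg_neg, hFU]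

theorem neg_mul_mul_neg_mul_eq_neg_one (hF2 : F * F = -1) (hU : star U * U = 1)
    (hFU : F * U = star U * F) : (-F * U) * (-F * U) = -1 :=
  calc (-F * U) * (-F * U) = F * U * F * U := by noncomm_ring
    _ = star U * (F * F) * U := by rw [hFU]; noncomm_ring
    _ = -1 := by rw [hF2, mul_neg_one, neg_mul, hU]

theorem star_cayley_mul_cayley (hA : star A = -A) (hS1 : (1 - A) * S = 1) :
    star ((1 + A) * S) * ((1 + A) * S) = 1 := by
  have hS' : star S * (1 + A) = 1 := by
    simpa [star_mul, hA, sub_eq_add_neg] using congrArg star hS1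
  calc star ((1 + A) * S) * ((1 + A) * S) = star S * (1 + A) * ((1 - A) * S) := by
        rw [star_mul, star_add, star_one, hA]; noncomm_ring
    _ = 1 := by rw [hS', hS1, one_mul]

theorem mul_cayley_eq_star_cayley_mul (hA : star A = -A) (hFA : F * A = -(A * F))
    (hS1 : (1 - A) * S = 1) : F * ((1 + A) * S) = star ((1 + A) * S) * F := by
  have hS' : star S * (1 + A) = 1 := by
    simpa [star_mul, hA, sub_eq_add_neg] using congrArg star hS1
  have hF1p : F * (1 + A) = (1 - A) * F := by rw [mul_add, hFA]; noncomm_ring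
  have hF1m : F * (1 - A) = (1 + A) * F := by rw [mul_sub, hFA]; noncomm_ring
  calc F * ((1 + A) * S) = star S * (1 + A) * ((1 - A) * F * S) := by
        rw [hS', one_mul, ← hF1p, mul_assoc]
    _ = star S * ((1 - A) * ((1 + A) * F)) * S := by noncomm_ring
    _ = star S * (1 - A) * F * ((1 - A) * S) := by rw [← hF1m]; noncomm_ring
    _ = star ((1 + A) * S) * F := by
        rw [hS1, mul_one, star_mul, star_add, star_one, hA, sub_eq_add_neg]

end CayleyAlgebra

theorem cayley_sub_sub_smul_eq {R : Type*} [Ring R] [Algebra ℝ R] {F A S : R} (P : R)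
    (hS : (1 - A) * S = 1) :
    -F * ((1 + A) * S) - F - (-2 : ℝ) • (F * P) = (-2 : ℝ) • (F * (S - P)) := by
  calc -F * ((1 + A) * S) - F - (-2 : ℝ) • (F * P)
      = -F * ((1 + A) * S) - F * ((1 - A) * S) - (-2 : ℝ) • (F * P) := by rw [hS, mul_one]
    _ = (-2 : ℝ) • (F * (S - P)) := by simp only [neg_smul, two_smul]; noncomm_ring

theorem ContinuousLinearMap.isUnit_of_coercive {V : Type*} [NormedAddCommGroup V]
    [InnerProductSpace ℝ V] [CompleteSpace V] (L : V →L[ℝ] V) {C : ℝ} (hC : 0 < C)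
    (hL : ∀ v, C * ‖v‖ * ‖v‖ ≤ ⟪L v, v⟫) : IsUnit L := by
  have hB : IsCoercive ((innerSL ℝ).comp L) := ⟨C, hC, hL⟩
  have hL' : InnerProductSpace.continuousLinearMapOfBilin ((innerSL ℝ).comp L) = L := by
    ext v
    refine ext_inner_right ℝ fun w => ?_
    simp [InnerProductSpace.continuousLinearMapOfBilin_apply]
  rw [← hL']
  exact isUnit_iff_bijective.mpr
    ⟨LinearMap.ker_eq_bot.mp hB.ker_eq_bot, LinearMap.range_eq_top.mp hB.range_eq_top⟩

section SkewAdjoint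

variable {H : Type*} [NormedAddCommGroup H] [InnerProductSpace ℝ H] [CompleteSpace H]
  {A : H →L[ℝ] H}

theorem inner_apply_self_eq_zero_of_adjoint_eq_neg (hA : adjoint A = -A) (x : H) :
    ⟪A x, x⟫ = 0 := by
  have h := adjoint_inner_left A x x
  rw [hA, neg_apply, inner_neg_left, real_inner_comm] at h
  rw [real_inner_comm]
  linarith

theorem norm_sub_apply_sq_of_adjoint_eq_neg (hA : adjoint A = -A) (x : H) :
    ‖x - A x‖ ^ 2 = ‖x‖ ^ 2 + ‖A x‖ ^ 2 := by
  rw [norm_sub_sq_real, real_inner_comm, inner_apply_self_eq_zero_of_adjoint_eq_neg hA]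
  ring

theorem isUnit_one_sub_of_adjoint_eq_neg (hA : adjoint A = -A) : IsUnit (1 - A) := by
  refine (1 - A).isUnit_of_coercive one_pos fun v => ?_
  rw [sub_apply, one_apply_eq_self, inner_sub_left, inner_apply_self_eq_zero_of_adjoint_eq_neg hA,
    real_inner_self_eq_norm_mul_norm]
  linarith

theorem orthogonal_range_eq_ker_of_adjoint_eq_neg (hA : adjoint A = -A) :
    (LinearMap.range (A : H →ₗ[ℝ] H))ᗮ = LinearMap.ker (A : H →ₗ[ℝ] H) := by
  rw [orthogonal_range, hA]
  ext x
  simp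

theorem norm_sub_starProjection_ker_lt_one (hA : adjoint A = -A) {S : H →L[ℝ] H}
    (hS : (1 - A) * S = 1) {C : ℝ}
    (hC : ∀ y ∈ (LinearMap.ker (A : H →ₗ[ℝ] H))ᗮ, ‖y‖ ≤ C * ‖A y‖)
    [(LinearMap.ker (A : H →ₗ[ℝ] H)).HasOrthogonalProjection] :
    ‖S - (LinearMap.ker (A : H →ₗ[ℝ] H)).starProjection‖ < 1 := by
  set N := LinearMap.ker (A : H →ₗ[ℝ] H)
  set q := C ^ 2 / (C ^ 2 + 1)
  have hbound : ∀ z, ‖(S - N.starProjection) z‖ ≤ √q * ‖z‖ := by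
    intro z
    set y := (S - N.starProjection) z
    have hPz : A (N.starProjection z) = 0 := N.starProjection_apply_mem z
    have hyA : y - A y = z - N.starProjection z := by
      have hSz : S z - A (S z) = z := by simpa using congr($hS z)
      simp only [y, sub_apply, map_sub, hPz]
      linear_combination (norm := module) hSz
    have hy : y ∈ Nᗮ := by
      have hAy : A y ∈ Nᗮ := by
        rw [show N = _ from (orthogonal_range_eq_ker_of_adjoint_eq_neg hA).symm]
        exact Submodule.le_orthogonal_orthogonal _ ⟨y, rfl⟩
      rw [show y = (y - A y) + A y by abel, hyA]
      exact add_mem (N.sub_starProjection_mem_orthogonal z) hAy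
    have hpyth : ‖y‖ ^ 2 + ‖A y‖ ^ 2 ≤ ‖z‖ ^ 2 := by
      rw [← norm_sub_apply_sq_of_adjoint_eq_neg hA, hyA]
      gcongr
      simpa [N.starProjection_orthogonal'] using Nᗮ.norm_starProjection_apply_le z
    have hyC : ‖y‖ ^ 2 ≤ C ^ 2 * ‖A y‖ ^ 2 := by
      nlinarith [hC y hy, norm_nonneg y, norm_nonneg (A y)]
    rw [← Real.sqrt_sq (norm_nonneg z), ← Real.sqrt_mul (by positivity)]
    refine (Real.le_sqrt (norm_nonneg y) (by positivity)).mpr ?_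
    rw [div_mul_eq_mul_div, le_div_iff₀ (by positivity)]
    nlinarith
  calc ‖S - N.starProjection‖ ≤ √q := opNorm_le_bound _ (Real.sqrt_nonneg q) hbound
    _ < 1 := by
      rw [Real.sqrt_lt' one_pos, one_pow, div_lt_one (by positivity)]
      linarith

end SkewAdjoint

section Projection

variable {𝕜 E : Type*} [RCLike 𝕜] [NormedAddCommGroup E] [InnerProductSpace 𝕜 E]

theorem Submodule.finiteDimensional_orthogonal_of_finiteDimensional_quotient
    (K : Submodule 𝕜 E) [FiniteDimensional 𝕜 (E ⧸ K)] : FiniteDimensional 𝕜 Kᗮ := by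
  refine .of_injective (K.mkQ ∘ₗ Kᗮ.subtype) fun x y hxy => ?_
  have hK : (x : E) - y ∈ K := by
    simpa [Submodule.Quotient.eq] using hxy
  exact Subtype.ext <| sub_eq_zero.mp <|
    (Submodule.disjoint_def.mp (Submodule.orthogonal_disjoint K)) _ hK (Kᗮ.sub_mem x.2 y.2)

theorem Submodule.isCompactOperator_starProjection (K : Submodule 𝕜 E) [FiniteDimensional 𝕜 K] :
    IsCompactOperator K.starProjection :=
  (isCompactOperator_of_locallyCompactSpace_dom K.orthogonalProjectionOnto).clm_comp K.subtypeL

end Projection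

section ClosedRange

variable {𝕜 E F : Type*} [RCLike 𝕜] [NormedAddCommGroup E] [InnerProductSpace 𝕜 E]
  [CompleteSpace E] [NormedAddCommGroup F] [NormedSpace 𝕜 F]

theorem bijective_coprod_of_isCompl_range (B : E →L[𝕜] F) {W : Submodule 𝕜 F}
    (hW : IsCompl (LinearMap.range (B : E →ₗ[𝕜] F)) W) :
    Function.Bijective
      ((B.comp (LinearMap.ker (B : E →ₗ[𝕜] F))ᗮ.subtypeL).coprod W.subtypeL) := by
  have : (LinearMap.ker (B : E →ₗ[𝕜] F)).HasOrthogonalProjection :=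
    have := B.isClosed_ker.completeSpace_coe
    inferInstance
  constructor
  · refine (injective_iff_map_eq_zero _).mpr fun ⟨x, w⟩ h => ?_
    simp only [coprod_apply, coe_comp, Submodule.coe_subtypeL, Submodule.coe_subtype,
      Function.comp_apply] at h
    have hw : (w : F) = 0 :=
      (Submodule.disjoint_def.mp hW.disjoint) _ ⟨-x, by simp [eq_neg_of_add_eq_zero_right h]⟩ w.2
    have hx : (x : E) = 0 :=
      (Submodule.disjoint_def.mp (Submodule.orthogonal_disjoint _)) _
        (by simpa [hw] using h) x.2
    exact Prod.ext (Subtype.ext hx) (Subtype.ext hw)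
  · intro y
    obtain ⟨r, ⟨u, rfl⟩, w, hw, rfl⟩ :=
      Submodule.mem_sup.mp (hW.sup_eq_top ▸ Submodule.mem_top (x := y))
    obtain ⟨k, hk, x, hx, rfl⟩ := Submodule.exists_add_mem_mem_orthogonal
      (K := LinearMap.ker (B : E →ₗ[𝕜] F)) u
    refine ⟨(⟨x, hx⟩, ⟨w, hw⟩), ?_⟩
    have hBk : B k = 0 := hk
    simp [hBk]

theorem exists_norm_le_mul_norm_apply_of_mem_orthogonal_ker [CompleteSpace F] (B : E →L[𝕜] F)
    [FiniteDimensional 𝕜 (F ⧸ LinearMap.range (B : E →ₗ[𝕜] F))] :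
    ∃ C : ℝ, ∀ x ∈ (LinearMap.ker (B : E →ₗ[𝕜] F))ᗮ, ‖x‖ ≤ C * ‖B x‖ := by
  obtain ⟨W, hW⟩ := Submodule.exists_isCompl (LinearMap.range (B : E →ₗ[𝕜] F))
  have : FiniteDimensional 𝕜 W := (Submodule.quotientEquivOfIsCompl _ W hW).finiteDimensional
  have : CompleteSpace W := FiniteDimensional.complete 𝕜 W
  have : CompleteSpace (LinearMap.ker (B : E →ₗ[𝕜] F))ᗮ :=
    (Submodule.isClosed_orthogonal _).completeSpace_coe
  have hg := bijective_coprod_of_isCompl_range B hW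
  obtain ⟨K, hK⟩ := antilipschitz_of_injective_of_isClosed_range _ hg.1
    (hg.2.range_eq ▸ isClosed_univ)
  refine ⟨K, fun x hx => ?_⟩
  simpa [Prod.norm_def] using bound_of_antilipschitz _ hK (⟨x, hx⟩, 0)

end ClosedRange

theorem stmt16_general {H : Type*} [NormedAddCommGroup H] [InnerProductSpace ℝ H] [CompleteSpace H]
    (T F : H →L[ℝ] H)
    (hTa : ContinuousLinearMap.adjoint T = -T)
    (hTcoker : FiniteDimensional ℝ (H ⧸ LinearMap.range (T : H →ₗ[ℝ] H)))
    (hFa : ContinuousLinearMap.adjoint F = -F) (hF2 : F * F = -1)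
    (hTF : T * F = -(F * T)) :
    ∃ S : H →L[ℝ] H, (1 - T * F) * S = 1 ∧ S * (1 - T * F) = 1 ∧
      ContinuousLinearMap.adjoint (-F * ((1 + T * F) * S)) = -(-F * ((1 + T * F) * S)) ∧
      ContinuousLinearMap.adjoint (-F * ((1 + T * F) * S)) * (-F * ((1 + T * F) * S)) = 1 ∧
      (-F * ((1 + T * F) * S)) * (-F * ((1 + T * F) * S)) = -1 ∧
      ∃ K : H →L[ℝ] H, IsCompactOperator ⇑K ∧ ‖-F * ((1 + T * F) * S) - F - K‖ < 2 := by
  set A := T * F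
  have hTs : star T = -T := by rw [star_eq_adjoint, hTa]
  have hFs : star F = -F := by rw [star_eq_adjoint, hFa]
  have hAs : star A = -A := by
    rw [star_mul, hFs, hTs, neg_mul_neg, ← neg_neg (F * T), ← hTF]
  have hA : adjoint A = -A := by rw [← star_eq_adjoint, hAs]
  have hFA : F * A = -(A * F) := by
    rw [← mul_assoc, ← neg_neg (F * T), ← hTF, neg_mul, mul_assoc]
  obtain ⟨S, hS1, hS2⟩ : ∃ S, (1 - A) * S = 1 ∧ S * (1 - A) = 1 :=
    let ⟨u, hu⟩ := isUnit_one_sub_of_adjoint_eq_neg hA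
    ⟨↑u⁻¹, hu ▸ u.mul_inv, hu ▸ u.inv_mul⟩
  have hU := star_cayley_mul_cayley hAs hS1
  have hFU := mul_cayley_eq_star_cayley_mul hAs hFA hS1
  have hskew := star_neg_mul_eq_neg hFs hFU
  have hsq := neg_mul_mul_neg_mul_eq_neg_one hF2 hU hFU
  refine ⟨S, hS1, hS2, by rwa [← star_eq_adjoint],
    by rw [← star_eq_adjoint, hskew, neg_mul, hsq, neg_neg], hsq, ?_⟩
  have hrange : LinearMap.range (A : H →ₗ[ℝ] H) = LinearMap.range (T : H →ₗ[ℝ] H) :=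
    LinearMap.range_comp_of_range_eq_top _ <| LinearMap.range_eq_top.mpr fun y =>
      ⟨-F y, by simpa [neg_eq_iff_eq_neg] using congr($hF2 y)⟩
  have : FiniteDimensional ℝ (H ⧸ LinearMap.range (A : H →ₗ[ℝ] H)) := hrange ▸ hTcoker
  have : FiniteDimensional ℝ (LinearMap.ker (A : H →ₗ[ℝ] H)) :=
    orthogonal_range_eq_ker_of_adjoint_eq_neg hA ▸
      Submodule.finiteDimensional_orthogonal_of_finiteDimensional_quotient _
  obtain ⟨C, hC⟩ := exists_norm_le_mul_norm_apply_of_mem_orthogonal_ker A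
  set P := (LinearMap.ker (A : H →ₗ[ℝ] H)).starProjection
  have hFu : F ∈ unitary (H →L[ℝ] H) := by simp [Unitary.mem_iff, hFs, hF2]
  refine ⟨(-2 : ℝ) • (F * P),
    ((Submodule.isCompactOperator_starProjection _).clm_comp F).smul (-2 : ℝ), ?_⟩
  rw [cayley_sub_sub_smul_eq P hS1, norm_smul, CStarRing.norm_mem_unitary_mul _ hFu]
  norm_num
  linarith [norm_sub_starProjection_ker_lt_one hA hS1 hC]

/-- For a bounded skew-adjoint Fredholm operator `T` anti-commuting with a
skew-adjoint unitary `F` (`F² = -I`) on a real Hilbert space, `I - TF` is invertible and the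
Cayley transform `Φ(T) = -F(I + TF)(I - TF)⁻¹` is a skew-adjoint unitary with `Φ(T)² = -I`
and `‖Φ(T) - F‖ < 2` in the Calkin algebra. -/
theorem stmt16 {H : Type*} [NormedAddCommGroup H] [InnerProductSpace ℝ H] [CompleteSpace H]
    (T F : H →L[ℝ] H)
    (hTa : ContinuousLinearMap.adjoint T = -T)
    (hTker : FiniteDimensional ℝ ↥(LinearMap.ker (T : H →ₗ[ℝ] H)))
    (hTcoker : FiniteDimensional ℝ (H ⧸ LinearMap.range (T : H →ₗ[ℝ] H)))
    (hFa : ContinuousLinearMap.adjoint F = -F) (hF2 : F * F = -1)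
    (hTF : T * F = -(F * T)) :
    ∃ S : H →L[ℝ] H, (1 - T * F) * S = 1 ∧ S * (1 - T * F) = 1 ∧
      ContinuousLinearMap.adjoint (-F * ((1 + T * F) * S)) = -(-F * ((1 + T * F) * S)) ∧
      ContinuousLinearMap.adjoint (-F * ((1 + T * F) * S)) * (-F * ((1 + T * F) * S)) = 1 ∧
      (-F * ((1 + T * F) * S)) * (-F * ((1 + T * F) * S)) = -1 ∧
      ∃ K : H →L[ℝ] H, IsCompactOperator ⇑K ∧ ‖-F * ((1 + T * F) * S) - F - K‖ < 2 :=
  stmt16_general T F hTa hTcoker hFa hF2 hTF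
end

section
/- Let f : ℝ → ℝ be continuous with f(t) = 1 for t ≤ 0 and f(t) = -1 for t ≥ 1, and fix a skew-adjoint unitary F on a finite-dimensional real inner product space V (F² = -I). For ε ∈ {±1}, the ODE u' + ε f u = 0 on ℝ has a nonzero solution in L²(ℝ) if and only if ε = -1, and in that case the space of L² solutions is one-dimensional. -/
/-!
Every solution of `u' = -a u` is `u 0` times `N t = exp (-∫₀ᵗ a)`, so the solutions form the line
through `N` and everything hinges on whether `N ∈ L²`. For `a = ε f` the function `N` is a
multiple of `exp (-ε t)` on `(-∞, 0]` and of `exp (ε t)` on `[1, ∞)`: both tails decay exactly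
when `ε = -1`, whereas for `ε = 1` it grows at `+∞`.
-/

open MeasureTheory Real Set intervalIntegral

noncomputable def normalizedSolution (a : ℝ → ℝ) (t : ℝ) : ℝ :=
  exp (-∫ s in (0 : ℝ)..t, a s)

section NormalizedSolution

variable {a u : ℝ → ℝ}

theorem normalizedSolution_pos (a : ℝ → ℝ) (t : ℝ) : 0 < normalizedSolution a t := exp_pos _

theorem normalizedSolution_ne_zero (a : ℝ → ℝ) : normalizedSolution a ≠ 0 :=
  fun h => (normalizedSolution_pos a 0).ne' (congrFun h 0)

theorem continuous_normalizedSolution (ha : Continuous a) : Continuous (normalizedSolution a) :=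
  continuous_exp.comp (continuous_primitive (fun _ _ => ha.intervalIntegrable _ _) 0).neg

theorem hasDerivAt_normalizedSolution (ha : Continuous a) (t : ℝ) :
    HasDerivAt (normalizedSolution a) (-(a t * normalizedSolution a t)) t := by
  have hG := (ha.integral_hasStrictDerivAt 0 t).hasDerivAt
  exact hG.neg.exp.congr_deriv (by rw [normalizedSolution, Pi.neg_apply]; ring)

theorem eq_smul_normalizedSolution_of_hasDerivAt (ha : Continuous a)
    (hu : ∀ t, HasDerivAt u (-(a t * u t)) t) : u = u 0 • normalizedSolution a := by
  have hconst : ∀ t, HasDerivAt (u / normalizedSolution a) 0 t := fun t =>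
    ((hu t).div (hasDerivAt_normalizedSolution ha t)
      (normalizedSolution_pos a t).ne').congr_deriv (by ring)
  funext t
  have := is_const_of_deriv_eq_zero (fun t => (hconst t).differentiableAt)
    (fun t => (hconst t).deriv) t 0
  rw [Pi.div_apply, Pi.div_apply, div_eq_iff (normalizedSolution_pos a t).ne'] at this
  simpa [normalizedSolution] using this

theorem memLp_normalizedSolution_of_hasDerivAt (ha : Continuous a)
    (hu : ∀ t, HasDerivAt u (-(a t * u t)) t) (hu0 : u ≠ 0) {p : ENNReal} (hup : MemLp u p) :
    MemLp (normalizedSolution a) p := by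
  have hsmul := eq_smul_normalizedSolution_of_hasDerivAt ha hu
  have hc : u 0 ≠ 0 := fun h => hu0 (by rw [hsmul, h, zero_smul])
  rw [← inv_smul_smul₀ hc (normalizedSolution a), ← hsmul]
  exact hup.const_smul _

theorem normalizedSolution_sq (a : ℝ → ℝ) (t : ℝ) :
    normalizedSolution a t ^ 2 = normalizedSolution (fun s => 2 * a s) t := by
  rw [normalizedSolution, normalizedSolution, intervalIntegral.integral_const_mul, ← exp_nat_mul]
  push_cast
  ring_nf

theorem memLp_two_normalizedSolution_iff (ha : Continuous a) :
    MemLp (normalizedSolution a) 2 ↔ Integrable (normalizedSolution fun s => 2 * a s) := by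
  rw [memLp_two_iff_integrable_sq (continuous_normalizedSolution ha).aestronglyMeasurable]
  simp only [normalizedSolution_sq]

theorem normalizedSolution_eq_mul_exp_of_eqOn (ha : Continuous a) {b t β : ℝ}
    (h : EqOn a (fun _ => β) (uIcc b t)) :
    normalizedSolution a t = normalizedSolution a b * exp (-(β * (t - b))) := by
  rw [normalizedSolution, normalizedSolution, ← exp_add,
    ← integral_add_adjacent_intervals (ha.intervalIntegrable 0 b) (ha.intervalIntegrable b t),
    integral_congr h, intervalIntegral.integral_const, smul_eq_mul, neg_add, mul_comm (t - b)]

theorem integrable_normalizedSolution (ha : Continuous a) {b c α β : ℝ} (hα : α < 0)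
    (hβ : 0 < β) (hb : ∀ t ≤ b, a t = α) (hc : ∀ t ≥ c, a t = β) :
    Integrable (normalizedSolution a) := by
  have hleft : IntegrableOn (normalizedSolution a) (Iic b) := by
    refine IntegrableOn.congr_fun ((integrableOn_exp_mul_Iic (neg_pos.2 hα) b).const_mul
      (normalizedSolution a b * exp (α * b))) (fun t ht => ?_) measurableSet_Iic
    rw [normalizedSolution_eq_mul_exp_of_eqOn (b := b) (t := t) ha
      fun s hs => hb s (uIcc_of_ge (mem_Iic.1 ht) ▸ hs).2, mul_assoc, ← exp_add]
    ring_nf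
  have hmid : IntegrableOn (normalizedSolution a) (Icc b c) :=
    (continuous_normalizedSolution ha).integrableOn_Icc
  have hright : IntegrableOn (normalizedSolution a) (Ioi c) := by
    refine IntegrableOn.congr_fun ((integrableOn_exp_mul_Ioi (neg_neg_of_pos hβ) c).const_mul
      (normalizedSolution a c * exp (β * c))) (fun t ht => ?_) measurableSet_Ioi
    rw [normalizedSolution_eq_mul_exp_of_eqOn (b := c) (t := t) ha
      fun s hs => hc s (uIcc_of_le (mem_Ioi.1 ht).le ▸ hs).1, mul_assoc, ← exp_add]
    ring_nf
  rw [← integrableOn_univ, ← Iic_union_Ioi (a := b), integrableOn_union]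
  refine ⟨hleft, (hmid.union hright).mono_set fun t ht => ?_⟩
  rcases le_or_gt t c with htc | htc
  exacts [Or.inl ⟨le_of_lt ht, htc⟩, Or.inr htc]

theorem not_integrable_normalizedSolution (ha : Continuous a) {c β : ℝ} (hβ : β ≤ 0)
    (hc : ∀ t ≥ c, a t = β) : ¬ Integrable (normalizedSolution a) := by
  intro hint
  have hconst : IntegrableOn (fun _ => normalizedSolution a c) (Ioi c) := by
    refine hint.integrableOn.mono' aestronglyMeasurable_const
      ((ae_restrict_iff' measurableSet_Ioi).2 (ae_of_all _ fun t ht => ?_))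
    rw [norm_of_nonneg (normalizedSolution_pos a c).le,
      normalizedSolution_eq_mul_exp_of_eqOn (b := c) (t := t) ha
        fun s hs => hc s (uIcc_of_le (mem_Ioi.1 ht).le ▸ hs).1]
    have hexp : 0 ≤ -(β * (t - c)) := by nlinarith [mem_Ioi.1 ht]
    exact le_mul_of_one_le_right (normalizedSolution_pos a c).le (one_le_exp hexp)
  simp [(normalizedSolution_pos a c).ne', Real.volume_Ioi] at hconst

end NormalizedSolution

theorem stmt17_general
    (f : ℝ → ℝ) (hf : Continuous f)
    (hf0 : ∀ t ≤ (0 : ℝ), f t = 1) (hf1 : ∀ t ≥ (1 : ℝ), f t = -1)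
    (ε : ℝ) (hε : ε = 1 ∨ ε = -1) :
    ((∃ u : ℝ → ℝ, (∀ t, HasDerivAt u (-(ε * f t * u t)) t) ∧ MemLp u 2 volume ∧ u ≠ 0) ↔
      ε = -1) ∧
    (ε = -1 → ∃ u₀ : ℝ → ℝ,
      (∀ t, HasDerivAt u₀ (-(ε * f t * u₀ t)) t) ∧ MemLp u₀ 2 volume ∧ u₀ ≠ 0 ∧
      ∀ u : ℝ → ℝ, (∀ t, HasDerivAt u (-(ε * f t * u t)) t) → MemLp u 2 volume →
        ∃ c : ℝ, u = c • u₀) := by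
  have ha : Continuous fun t => ε * f t := continuous_const.mul hf
  have hN := hasDerivAt_normalizedSolution ha
  have hL2 : MemLp (normalizedSolution fun t => ε * f t) 2 ↔ ε = -1 := by
    rw [memLp_two_normalizedSolution_iff ha]
    have h2a : Continuous fun t => 2 * (ε * f t) := continuous_const.mul ha
    have hleft : ∀ t ≤ (0 : ℝ), 2 * (ε * f t) = 2 * ε := fun t ht => by rw [hf0 t ht, mul_one]
    have hright : ∀ t ≥ (1 : ℝ), 2 * (ε * f t) = -(2 * ε) := fun t ht => by
      rw [hf1 t ht]; ring
    rcases hε with rfl | rfl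
    · exact iff_of_false (not_integrable_normalizedSolution h2a (by norm_num) hright)
        (by norm_num)
    · exact iff_of_true
        (integrable_normalizedSolution h2a (by norm_num) (by norm_num) hleft hright) rfl
  have hN0 := normalizedSolution_ne_zero fun t => ε * f t
  refine ⟨⟨fun ⟨u, hu, huL2, hu0⟩ => hL2.1 ?_, fun h => ⟨_, hN, hL2.2 h, hN0⟩⟩,
    fun h => ⟨_, hN, hL2.2 h, hN0, fun u hu _ => ⟨u 0, ?_⟩⟩⟩
  · exact memLp_normalizedSolution_of_hasDerivAt ha hu hu0 huL2
  · exact eq_smul_normalizedSolution_of_hasDerivAt ha hu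

/-- For `f` continuous with `f = 1` on `(-∞,0]`, `f = -1` on `[1,∞)`, and a
skew-adjoint unitary `F` (`F² = -I`) on a finite-dimensional real inner product space `V`,
the ODE `u' + ε f u = 0` has a nonzero `L²` solution iff `ε = -1`, in which case the space
of `L²` solutions is one-dimensional. -/
theorem stmt17 {V : Type*} [NormedAddCommGroup V] [InnerProductSpace ℝ V]
    [FiniteDimensional ℝ V]
    (F : V →ₗ[ℝ] V) (hFa : LinearMap.adjoint F = -F) (hF2 : F * F = -1)
    (f : ℝ → ℝ) (hf : Continuous f)
    (hf0 : ∀ t ≤ (0 : ℝ), f t = 1) (hf1 : ∀ t ≥ (1 : ℝ), f t = -1)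
    (ε : ℝ) (hε : ε = 1 ∨ ε = -1) :
    ((∃ u : ℝ → ℝ, (∀ t, HasDerivAt u (-(ε * f t * u t)) t) ∧ MemLp u 2 volume ∧ u ≠ 0) ↔
      ε = -1) ∧
    (ε = -1 → ∃ u₀ : ℝ → ℝ,
      (∀ t, HasDerivAt u₀ (-(ε * f t * u₀ t)) t) ∧ MemLp u₀ 2 volume ∧ u₀ ≠ 0 ∧
      ∀ u : ℝ → ℝ, (∀ t, HasDerivAt u (-(ε * f t * u t)) t) → MemLp u 2 volume →
        ∃ c : ℝ, u = c • u₀) :=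
  stmt17_general f hf hf0 hf1 ε hε
end

section
/- Let V be a finite-dimensional real inner product space with a skew-adjoint orthogonal operator F (F² = -I). Define Φ : V → C(ℝ, V ⊕ V) by Φ(η)(x) = (ū(x)/√2)·(η - Fη, η + Fη), where ū is the unique L² solution of u' - fu = 0 with ū(0) = 1 and f : ℝ → ℝ is continuous with f = 1 on (-∞,0] and f = -1 on [1,∞). Then Φ is injective and each Φ(η) lies in the kernel of the operator D = [[-d/dx, -f(x)F],[-f(x)F, d/dx]] acting on L²(ℝ, V ⊕ V). -/
/-!
Since `F² = -1`, `F` sends `η + Fη` to `-(η - Fη)` and `η - Fη` to `η + Fη`, so on functions of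
the form `x ↦ (g x • (η - Fη), g x • (η + Fη))` the system `D = 0` collapses to the scalar
equation `g' = f g`, which `ū / √2` solves. Square-integrability is inherited from `ū`, and
injectivity follows by evaluating at `0`, where `ū(0) = 1`, and adding the two components.
-/

open MeasureTheory

namespace MeasureTheory

theorem MemLp.smul_const {α 𝕜 E : Type*} [MeasurableSpace α] {μ : Measure α} {p : ENNReal}
    [NormedField 𝕜] [NormedAddCommGroup E] [NormedSpace 𝕜 E] {f : α → 𝕜}
    (hf : MemLp f p μ) (c : E) : MemLp (fun x => f x • c) p μ :=
  (memLp_top_const c).smul hf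

end MeasureTheory

namespace LinearMap

variable {R M : Type*} [Ring R] [AddCommGroup M] [Module R M] {F : M →ₗ[R] M}

theorem apply_apply_of_mul_self_eq_neg_one (hF : F * F = -1) (v : M) : F (F v) = -v := by
  simpa using LinearMap.congr_fun hF v

theorem apply_add_apply_self_of_mul_self_eq_neg_one (hF : F * F = -1) (v : M) :
    F (v + F v) = -(v - F v) := by
  rw [map_add, apply_apply_of_mul_self_eq_neg_one hF]
  abel

theorem apply_sub_apply_self_of_mul_self_eq_neg_one (hF : F * F = -1) (v : M) :
    F (v - F v) = v + F v := by
  rw [map_sub, apply_apply_of_mul_self_eq_neg_one hF]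
  abel

end LinearMap

theorem injective_smul_sub_smul_add {𝕜 V : Type*} [DivisionRing 𝕜] [CharZero 𝕜]
    [AddCommGroup V] [Module 𝕜 V] (F : V → V) {c : 𝕜} (hc : c ≠ 0) :
    Function.Injective fun η => (c • (η - F η), c • (η + F η)) := by
  intro η₁ η₂ h
  simp only [Prod.mk.injEq, (smul_right_injective V hc).eq_iff] at h
  have h2 : (2 : 𝕜) • η₁ = (2 : 𝕜) • η₂ := by
    rw [two_smul, two_smul]
    calc η₁ + η₁ = (η₁ - F η₁) + (η₁ + F η₁) := by abel
      _ = (η₂ - F η₂) + (η₂ + F η₂) := by rw [h.1, h.2]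
      _ = η₂ + η₂ := by abel
  exact smul_right_injective V two_ne_zero h2

section Kernel

variable {𝕜 V : Type*} [NontriviallyNormedField 𝕜] [NormedAddCommGroup V] [NormedSpace 𝕜 V]
  {F : V →ₗ[𝕜] V} {f g : 𝕜 → 𝕜} {x : 𝕜}

theorem HasDerivAt.smul_sub_apply_self (hF : F * F = -1) (hg : HasDerivAt g (f x * g x) x)
    (η : V) : HasDerivAt (fun t => g t • (η - F η)) (-(f x • F (g x • (η + F η)))) x := by
  convert hg.smul_const (η - F η) using 1
  rw [map_smul, F.apply_add_apply_self_of_mul_self_eq_neg_one hF, smul_neg, smul_neg, neg_neg,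
    smul_smul]

theorem HasDerivAt.smul_add_apply_self (hF : F * F = -1) (hg : HasDerivAt g (f x * g x) x)
    (η : V) : HasDerivAt (fun t => g t • (η + F η)) (f x • F (g x • (η - F η))) x := by
  convert hg.smul_const (η + F η) using 1
  rw [map_smul, F.apply_sub_apply_self_of_mul_self_eq_neg_one hF, smul_smul]

end Kernel

theorem stmt18_general {V : Type*} [NormedAddCommGroup V] [InnerProductSpace ℝ V]
    (F : V →ₗ[ℝ] V) (hF2 : F * F = -1)
    (f : ℝ → ℝ)
    (u : ℝ → ℝ) (hu : ∀ t, HasDerivAt u (f t * u t) t) (hu0 : u 0 = 1)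
    (huL2 : MemLp u 2 volume) :
    let Φ : V → ℝ → V × V := fun η x =>
      ((u x / Real.sqrt 2) • (η - F η), (u x / Real.sqrt 2) • (η + F η))
    Function.Injective Φ ∧
    ∀ η : V, MemLp (Φ η) 2 volume ∧
      (∀ x : ℝ, HasDerivAt (fun t => (Φ η t).1) (-(f x • F ((Φ η x).2))) x) ∧
      (∀ x : ℝ, HasDerivAt (fun t => (Φ η t).2) (f x • F ((Φ η x).1)) x) := by
  intro Φ
  have hg : ∀ x, HasDerivAt (fun t => u t / √2) (f x * (u x / √2)) x := fun x => by
    simpa only [mul_div_assoc] using (hu x).div_const √2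
  refine ⟨fun η₁ η₂ h => ?_, fun η => ⟨?_, fun x => ?_, fun x => ?_⟩⟩
  · exact injective_smul_sub_smul_add F (c := u 0 / √2) (by simp [hu0]) (congrFun h 0)
  · exact memLp_prod_iff.2
      ⟨(huL2.mul_const (√2)⁻¹).smul_const _, (huL2.mul_const (√2)⁻¹).smul_const _⟩
  · exact (hg x).smul_sub_apply_self hF2 η
  · exact (hg x).smul_add_apply_self hF2 η

/-- With `F` a skew-adjoint orthogonal operator (`F² = -I`) on a
finite-dimensional real inner product space `V`, `f` continuous with `f = 1` on `(-∞,0]` and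
`f = -1` on `[1,∞)`, and `ū` the unique `L²` solution of `u' - fu = 0` with `ū(0) = 1`, the map
`Φ(η)(x) = (ū(x)/√2)·(η - Fη, η + Fη)` is injective and takes values in the kernel of
`D = [[-d/dx, -fF],[-fF, d/dx]]`, i.e. each `Φ(η)` is square-integrable and satisfies
`(Φη)₁' = -f·F(Φη)₂` and `(Φη)₂' = f·F(Φη)₁`. -/
theorem stmt18 {V : Type*} [NormedAddCommGroup V] [InnerProductSpace ℝ V]
    [FiniteDimensional ℝ V]
    (F : V →ₗ[ℝ] V) (hFa : LinearMap.adjoint F = -F) (hF2 : F * F = -1)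
    (f : ℝ → ℝ) (hf : Continuous f)
    (hf0 : ∀ t ≤ (0 : ℝ), f t = 1) (hf1 : ∀ t ≥ (1 : ℝ), f t = -1)
    (u : ℝ → ℝ) (hu : ∀ t, HasDerivAt u (f t * u t) t) (hu0 : u 0 = 1)
    (huL2 : MemLp u 2 volume) :
    let Φ : V → ℝ → V × V := fun η x =>
      ((u x / Real.sqrt 2) • (η - F η), (u x / Real.sqrt 2) • (η + F η))
    Function.Injective Φ ∧
    ∀ η : V, MemLp (Φ η) 2 volume ∧
      (∀ x : ℝ, HasDerivAt (fun t => (Φ η t).1) (-(f x • F ((Φ η x).2))) x) ∧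
      (∀ x : ℝ, HasDerivAt (fun t => (Φ η t).2) (f x • F ((Φ η x).1)) x) :=
  stmt18_general F hF2 f u hu hu0 huL2
end
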